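/- arXiv:2509.06852 — 3 statements merged into one kernel-verified Lean document; each statement's English description precedes it below -/
import Mathlib

section
/- Let A be a real n×n matrix and let m be an even positive integer. Then the number of eigenvalues of A^m (over ℂ, counted with algebraic multiplicity) lying in the real interval (-∞, 0) is even. -/
/-!
Over `ℂ` the eigenvalues of `A ^ m` are the `m`-th powers of those of `A`: for any polynomial `g`,
`det (g A) = ∏ g μ` over the eigenvalues `μ` of `A`, by factoring `g` into linear factors. An
eigenvalue `μ` with `μ ^ m < 0` is not real because `m` is even, and since `A` is real the set of
such `μ` is stable under conjugation, so its elements pair off with their conjugates.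
-/

open Polynomial Matrix ComplexConjugate

namespace Matrix

variable {K n : Type*} [Field K] [IsAlgClosed K] [Fintype n] [DecidableEq n] (M : Matrix n n K)

theorem card_roots_charpoly : M.charpoly.roots.card = Fintype.card n := by
  rw [IsAlgClosed.card_roots_eq_natDegree, charpoly_natDegree_eq_dim]

theorem det_aeval_X_sub_C (a : K) :
    (aeval M (X - C a)).det = (M.charpoly.roots.map (· - a)).prod := by
  have hsub : aeval M (X - C a) = -(scalar n a - M) := by
    rw [neg_sub, map_sub, aeval_X, aeval_C]; rfl
  rw [hsub, det_neg, ← eval_charpoly,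
    (IsAlgClosed.splits M.charpoly).eval_eq_prod_roots_of_monic M.charpoly_monic,
    ← card_roots_charpoly M, ← Multiset.card_map (a - ·), ← Multiset.prod_map_neg,
    Multiset.map_map]
  simp

theorem det_aeval_eq_prod_roots_charpoly (g : K[X]) :
    (aeval M g).det = (M.charpoly.roots.map g.eval).prod := by
  have hg := IsAlgClosed.splits g
  -- both sides are multiplicative in `g`: compare them on `g = C c * ∏ (X - C a)`
  simp_rw [hg.eval_eq_prod_roots, Multiset.prod_map_mul, Multiset.map_const',
    Multiset.prod_replicate, card_roots_charpoly]
  rw [Multiset.prod_map_prod_map]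
  let φ : K[X] →* K := detMonoidHom.comp (aeval M : K[X] →ₐ[K] Matrix n n K).toMonoidHom
  change φ _ = _
  conv_lhs => rw [hg.eq_prod_roots]
  rw [map_mul, map_multiset_prod, Multiset.map_map]
  congr 1
  · simp [φ, algebraMap_eq_diagonal]
  · exact congrArg _ (Multiset.map_congr rfl fun a _ => det_aeval_X_sub_C M a)

theorem roots_charpoly_aeval (g : K[X]) :
    (aeval M g).charpoly.roots = M.charpoly.roots.map g.eval := by
  suffices (aeval M g).charpoly = ((M.charpoly.roots.map g.eval).map (X - C ·)).prod by
    rw [this, roots_multiset_prod_X_sub_C]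
  refine Polynomial.funext fun z => ?_
  have hz : scalar n z - aeval M g = aeval M (C z - g) := by
    rw [map_sub, aeval_C]; rfl
  rw [eval_charpoly, hz, det_aeval_eq_prod_roots_charpoly, eval_multiset_prod, Multiset.map_map]
  simp

theorem roots_charpoly_pow (m : ℕ) : (M ^ m).charpoly.roots = M.charpoly.roots.map (· ^ m) := by
  simpa using roots_charpoly_aeval M (X ^ m)

end Matrix

theorem Multiset.map_filter_eq_of_map_eq {α : Type*} {s : Multiset α} {f : α → α}
    {p : α → Prop} [DecidablePred p] (hs : s.map f = s) (hp : ∀ a, p (f a) ↔ p a) :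
    (s.filter p).map f = s.filter p := by
  calc (s.filter p).map f = (s.filter (p ∘ f)).map f := by simp_rw [Function.comp_def, hp]
    _ = s.filter p := by rw [← filter_map, hs]

namespace Complex

theorem map_conj_roots_map_algebraMap (P : ℝ[X]) :
    (P.map (algebraMap ℝ ℂ)).roots.map conj = (P.map (algebraMap ℝ ℂ)).roots := by
  rw [roots_map_of_injective_of_card_eq_natDegree (RingHom.injective _)
    IsAlgClosed.card_roots_eq_natDegree, Polynomial.map_map]
  congr 2
  ext x
  simp

theorem even_card_of_map_conj_eq {s : Multiset ℂ} (hs : s.map conj = s)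
    (hreal : ∀ z ∈ s, z.im ≠ 0) : Even s.card := by
  have hlower : s.filter (fun z => ¬ 0 < z.im) = (s.filter (fun z => 0 < z.im)).map conj := by
    conv_lhs => rw [← hs]
    rw [Multiset.filter_map]
    congr 1
    refine Multiset.filter_congr fun z hz => ?_
    have := hreal z hz
    simp only [Function.comp_apply, conj_im, not_lt, neg_nonpos]
    exact this.symm.le_iff_lt
  rw [← Multiset.filter_add_not (fun z => 0 < z.im) s, Multiset.card_add, hlower,
    Multiset.card_map]
  exact ⟨_, rfl⟩

theorem re_pow_nonneg_of_im_eq_zero {z : ℂ} (hz : z.im = 0) {m : ℕ} (hm : Even m) :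
    0 ≤ (z ^ m).re := by
  rw [← re_add_im z, hz, ofReal_zero, zero_mul, add_zero, ← ofReal_pow, ofReal_re]
  exact hm.pow_nonneg z.re

end Complex

theorem even_card_neg_eigenvalues_pow_even_general
    {n : ℕ} (A : Matrix (Fin n) (Fin n) ℝ) (m : ℕ) (hm : Even m) :
    Even ((((A ^ m).charpoly.map (algebraMap ℝ ℂ)).roots.filter
      (fun z : ℂ => z.im = 0 ∧ z.re < 0)).card) := by
  set S := (A.map (algebraMap ℝ ℂ)).charpoly.roots
  have hroots : ((A ^ m).charpoly.map (algebraMap ℝ ℂ)).roots = S.map (· ^ m) := by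
    rw [← charpoly_map, Matrix.map_pow, roots_charpoly_pow]
  have hS : S.map conj = S := by
    simpa only [S, charpoly_map] using Complex.map_conj_roots_map_algebraMap A.charpoly
  rw [hroots, Multiset.filter_map, Multiset.card_map]
  refine Complex.even_card_of_map_conj_eq (Multiset.map_filter_eq_of_map_eq hS fun z => ?_) ?_
  · simp [← map_pow]
  · intro z hz hzim
    exact (Multiset.of_mem_filter hz).2.not_ge (Complex.re_pow_nonneg_of_im_eq_zero hzim hm)

/-- For a real `n × n` matrix `A` and an even positive integer `m`, the number of
eigenvalues of `A ^ m` over `ℂ` (roots of the characteristic polynomial, counted with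
algebraic multiplicity) lying in the real interval `(-∞, 0)` is even. -/
theorem even_card_neg_eigenvalues_pow_even
    {n : ℕ} (A : Matrix (Fin n) (Fin n) ℝ) (m : ℕ) (hm : Even m) (hm' : 0 < m) :
    Even ((((A ^ m).charpoly.map (algebraMap ℝ ℂ)).roots.filter
      (fun z : ℂ => z.im = 0 ∧ z.re < 0)).card) :=
  even_card_neg_eigenvalues_pow_even_general A m hm
end

section
/- Let T be a tree and let C be a cycle (of length ≥ 3) in the line graph L(T). Then the vertex set of C induces a complete subgraph of L(T); in particular, every induced cycle in L(T) is a triangle. -/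
/-!
In an acyclic graph every edge `s(x, u)` is a bridge, so a walk in the line graph from an edge at
`u` to an edge at `x` must pass through `s(x, u)` itself: the edges along it trace out a walk from
`u` to `x` in the graph. Along a path in the line graph whose ends share a vertex `x`, this forces
each step to pivot at `x`, so every edge on the path contains `x`. A cycle `a, b, …, a` is the edge
`a b` followed by such a path, hence all of its vertices contain a common vertex of the tree, and
edges through a common vertex are pairwise adjacent in the line graph.
-/

open SimpleGraph

namespace SimpleGraph

variable {V : Type*} {G : SimpleGraph V}

lemma isClique_lineGraph_setOf_mem (x : V) :
    G.lineGraph.IsClique {g : G.edgeSet | x ∈ (g : Sym2 V)} :=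
  fun _ hg _ hg' hne => lineGraph_adj_iff_exists.mpr ⟨hne, x, hg, hg'⟩

lemma exists_walk_edges_subset_singleton {e : Sym2 V} (he : e ∈ G.edgeSet) {x y : V}
    (hx : x ∈ e) (hy : y ∈ e) : ∃ q : G.Walk x y, q.edges ⊆ [e] := by
  by_cases hxy : x = y
  · subst hxy
    exact ⟨.nil, by simp⟩
  · obtain rfl : e = s(x, y) := (Sym2.mem_and_mem_iff hxy).mp ⟨hx, hy⟩
    exact ⟨(G.mem_edgeSet.mp he).toWalk, by simp⟩

lemma Walk.exists_walk_edges_subset_of_lineGraph {e f : G.edgeSet} (p : G.lineGraph.Walk e f)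
    {x y : V} (hx : x ∈ (e : Sym2 V)) (hy : y ∈ (f : Sym2 V)) :
    ∃ q : G.Walk x y, q.edges ⊆ p.support.map (↑) := by
  induction p generalizing x with
  | nil =>
    obtain ⟨q, hq⟩ := exists_walk_edges_subset_singleton (Subtype.prop _) hx hy
    exact ⟨q, by simpa using hq⟩
  | @cons e e' f h p ih =>
    obtain ⟨-, u, hue, hue'⟩ := lineGraph_adj_iff_exists.mp h
    obtain ⟨q₁, hq₁⟩ := exists_walk_edges_subset_singleton e.prop hx hue
    obtain ⟨q₂, hq₂⟩ := ih hue' hy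
    refine ⟨q₁.append q₂, ?_⟩
    rw [Walk.edges_append, Walk.support_cons, List.map_cons]
    exact List.append_subset.mpr
      ⟨List.Subset.trans hq₁ (by simp), List.Subset.trans hq₂ (List.subset_cons_self _ _)⟩

lemma IsAcyclic.mem_support_of_lineGraph_walk (hG : G.IsAcyclic) {e e' f : G.edgeSet}
    {x u : V} (hxe : x ∈ (e : Sym2 V)) (hue : u ∈ (e : Sym2 V)) (hxu : x ≠ u)
    (p : G.lineGraph.Walk e' f) (hue' : u ∈ (e' : Sym2 V)) (hxf : x ∈ (f : Sym2 V)) :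
    e ∈ p.support := by
  have he : (e : Sym2 V) = s(x, u) := (Sym2.mem_and_mem_iff hxu).mp ⟨hxe, hue⟩
  have hbridge : G.IsBridge s(x, u) := isAcyclic_iff_forall_isBridge.mp hG (he ▸ e.prop)
  obtain ⟨q, hq⟩ := p.exists_walk_edges_subset_of_lineGraph hue' hxf
  have hmem := isBridge_iff_forall_walk_mem_edges.mp hbridge q.reverse
  rw [Walk.edges_reverse, List.mem_reverse, ← he] at hmem
  obtain ⟨g, hg, hge⟩ := List.mem_map.mp (hq hmem)
  exact Subtype.ext hge ▸ hg

lemma IsAcyclic.mem_of_mem_support_of_lineGraph_isPath (hG : G.IsAcyclic) {e f : G.edgeSet}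
    {p : G.lineGraph.Walk e f} (hp : p.IsPath) {x : V} (hxe : x ∈ (e : Sym2 V))
    (hxf : x ∈ (f : Sym2 V)) {g : G.edgeSet} (hg : g ∈ p.support) : x ∈ (g : Sym2 V) := by
  induction p with
  | nil => simp_all
  | @cons e e' f h p ih =>
    rw [Walk.cons_isPath_iff] at hp
    obtain ⟨-, u, hue, hue'⟩ := lineGraph_adj_iff_exists.mp h
    -- otherwise `p` would have to revisit `e`
    obtain rfl : u = x := by
      by_contra hux
      exact hp.2 (hG.mem_support_of_lineGraph_walk hxe hue (Ne.symm hux) p hue' hxf)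
    rcases List.mem_cons.mp (Walk.support_cons h p ▸ hg) with rfl | hg
    · exact hxe
    · exact ih hp.1 hue' hxf hg

lemma IsAcyclic.exists_forall_mem_of_lineGraph_isCycle (hG : G.IsAcyclic) {a : G.edgeSet}
    {w : G.lineGraph.Walk a a} (hw : w.IsCycle) :
    ∃ x : V, ∀ g ∈ w.support, x ∈ (g : Sym2 V) := by
  cases w with
  | nil => exact absurd hw Walk.not_isCycle_nil
  | cons h p =>
    obtain ⟨-, x, hxa, hxb⟩ := lineGraph_adj_iff_exists.mp h
    have hp : p.IsPath := ((Walk.cons_isCycle_iff p h).mp hw).1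
    refine ⟨x, fun g hg => ?_⟩
    have hg' : g ∈ p.support := by
      rcases List.mem_cons.mp (Walk.support_cons h p ▸ hg) with rfl | hg
      · exact p.end_mem_support
      · exact hg
    exact hG.mem_of_mem_support_of_lineGraph_isPath hp hxb hxa hg'

end SimpleGraph

/-- In the line graph of a tree, the vertex set of any cycle induces a complete
subgraph: any two distinct vertices on the cycle are adjacent. In particular every
induced cycle in the line graph of a tree is a triangle. -/
theorem cycle_in_lineGraph_of_tree_is_clique {V : Type*} (T : SimpleGraph V)
    (hT : T.IsTree) {a : T.edgeSet} (w : T.lineGraph.Walk a a) (hw : w.IsCycle) :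
    ∀ u ∈ w.support, ∀ v ∈ w.support, u ≠ v → T.lineGraph.Adj u v := by
  obtain ⟨x, hx⟩ := hT.isAcyclic.exists_forall_mem_of_lineGraph_isCycle hw
  exact fun u hu v hv huv => isClique_lineGraph_setOf_mem x (hx u hu) (hx v hv) huv
end

section
/- Let A be a real n×n matrix such that the number of real eigenvalues of A in (-∞, −1), counted with algebraic multiplicity, is even, and let m ≥ 2 be an integer. Then the number of eigenvalues of A^m (over ℂ, counted with algebraic multiplicity) lying in (-∞, −1) is also even. -/
/-!
Over an algebraically closed field, `det (q B)` is the product of `q` over the eigenvalues of `B`;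
applied to `q = z - X ^ m` this shows that the eigenvalues of `B ^ m` are the `m`-th powers of
those of `B`, with multiplicity. For a real matrix the non-real eigenvalues come in conjugate
pairs of equal multiplicity, and "`λ ^ m` is real and `< -1`" is invariant under conjugation, so
they contribute an even count. A real eigenvalue `x` contributes iff `x ^ m < -1`, that is, iff
`m` is odd and `x < -1`.
-/

open Polynomial Matrix

namespace Matrix

variable {K : Type*} [Field K] [IsAlgClosed K] {n : Type*} [Fintype n] [DecidableEq n]

theorem card_roots_charpoly_s16 (B : Matrix n n K) :
    Multiset.card B.charpoly.roots = Fintype.card n := by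
  rw [← (IsAlgClosed.splits B.charpoly).natDegree_eq_card_roots, charpoly_natDegree_eq_dim]

theorem det_sub_scalar_eq_prod_roots_charpoly (B : Matrix n n K) (c : K) :
    (B - scalar n c).det = (B.charpoly.roots.map fun r => r - c).prod := by
  rw [← neg_sub, det_neg, ← eval_charpoly,
    (IsAlgClosed.splits B.charpoly).eval_eq_prod_roots_of_monic B.charpoly_monic,
    ← card_roots_charpoly_s16 B, ← Multiset.card_map (c - ·), ← Multiset.prod_map_neg,
    Multiset.map_map]
  simp

theorem det_aeval_eq_prod_roots_charpoly_s16 (B : Matrix n n K) (q : K[X]) :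
    (aeval B q).det = (B.charpoly.roots.map q.eval).prod := by
  let detAeval : K[X] →* K := detMonoidHom.comp (aeval B).toMonoidHom
  change detAeval q = _
  have hC (c : K) : detAeval (C c) = c ^ Fintype.card n := by
    simp [detAeval, algebraMap_eq_diagonal]
  have hX_sub_C (c : K) : detAeval (X - C c) = (B.charpoly.roots.map fun r => r - c).prod := by
    rw [← det_sub_scalar_eq_prod_roots_charpoly]
    simp [detAeval, algebraMap_eq_diagonal, scalar_apply, Pi.algebraMap_def]
  conv_lhs => rw [(IsAlgClosed.splits q).eq_prod_roots]
  rw [map_mul, map_multiset_prod, Multiset.map_map]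
  simp only [Function.comp_def, hX_sub_C, hC, (IsAlgClosed.splits q).eval_eq_prod_roots,
    Multiset.prod_map_mul, Multiset.map_const', Multiset.prod_replicate, card_roots_charpoly_s16]
  rw [Multiset.prod_map_prod_map]

theorem charpoly_aeval_eq_prod_roots_charpoly (B : Matrix n n K) (q : K[X]) :
    (aeval B q).charpoly = (B.charpoly.roots.map fun r => X - C (q.eval r)).prod := by
  refine Polynomial.funext fun z => ?_
  have hscalar : scalar n z - aeval B q = aeval B (C z - q) := by
    simp [algebraMap_eq_diagonal, scalar_apply, Pi.algebraMap_def]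
  rw [eval_charpoly, hscalar, det_aeval_eq_prod_roots_charpoly_s16, eval_multiset_prod,
    Multiset.map_map]
  simp

theorem roots_charpoly_aeval_s16 (B : Matrix n n K) (q : K[X]) :
    (aeval B q).charpoly.roots = B.charpoly.roots.map q.eval := by
  simpa [charpoly_aeval_eq_prod_roots_charpoly, Multiset.map_map, Function.comp_def] using
    roots_multiset_prod_X_sub_C (B.charpoly.roots.map q.eval)

theorem roots_charpoly_pow_s16 (B : Matrix n n K) (m : ℕ) :
    (B ^ m).charpoly.roots = B.charpoly.roots.map (· ^ m) := by
  simpa using roots_charpoly_aeval_s16 B (X ^ m)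

end Matrix

namespace Polynomial

theorem roots_map_ofReal_map_conj (p : ℝ[X]) :
    (p.map (algebraMap ℝ ℂ)).roots.map (starRingEnd ℂ) = (p.map (algebraMap ℝ ℂ)).roots := by
  rw [← (IsAlgClosed.splits _).roots_map, map_map]
  congr 2
  ext x
  simp

theorem roots_map_ofReal_filter_im_eq_zero (p : ℝ[X]) :
    (p.map (algebraMap ℝ ℂ)).roots.filter (fun z => z.im = 0) = p.roots.map (↑) := by
  ext z
  rw [Multiset.count_filter]
  split_ifs with hz
  · obtain ⟨x, rfl⟩ : ∃ x : ℝ, (x : ℂ) = z := ⟨z.re, Complex.ext rfl hz.symm⟩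
    rw [Multiset.count_map_eq_count' _ _ Complex.ofReal_injective, count_roots, count_roots,
      eq_rootMultiplicity_map (algebraMap ℝ ℂ).injective]
    rfl
  · refine (Multiset.count_eq_zero.mpr fun hmem => hz ?_).symm
    obtain ⟨x, -, rfl⟩ := Multiset.mem_map.mp hmem
    exact Complex.ofReal_im x

end Polynomial

theorem pow_lt_neg_one_iff {R : Type*} [Ring R] [LinearOrder R] [IsStrictOrderedRing R]
    {x : R} {m : ℕ} : x ^ m < -1 ↔ Odd m ∧ x < -1 := by
  rcases Nat.even_or_odd m with hm | hm
  · simp only [Nat.not_odd_iff_even.mpr hm, false_and, iff_false, not_lt]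
    exact (neg_one_lt_zero.trans_le (hm.pow_nonneg x)).le
  · rw [← hm.neg_one_pow, hm.strictMono_pow.lt_iff_lt]
    simp [hm]

theorem Multiset.even_card_filter_im_ne_zero_of_map_conj_eq (s : Multiset ℂ)
    (hs : s.map (starRingEnd ℂ) = s) (P : ℂ → Prop) [DecidablePred P]
    (hP : ∀ z, P (starRingEnd ℂ z) ↔ P z) :
    Even (s.filter fun z => P z ∧ z.im ≠ 0).card := by
  have hsplit : s.filter (fun z => P z ∧ z.im ≠ 0)
      = s.filter (fun z => P z ∧ 0 < z.im) + s.filter (fun z => P z ∧ z.im < 0) := by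
    have hdisjoint : s.filter (fun z => (P z ∧ 0 < z.im) ∧ P z ∧ z.im < 0) = 0 :=
      Multiset.filter_eq_nil.mpr fun z _ h => h.1.2.not_gt h.2.2
    rw [Multiset.filter_add_filter, hdisjoint, add_zero]
    exact Multiset.filter_congr fun z _ => by rw [ne_iff_lt_or_gt]; tauto
  have hconj : s.filter (fun z => P z ∧ z.im < 0)
      = (s.filter fun z => P z ∧ 0 < z.im).map (starRingEnd ℂ) := by
    conv_lhs => rw [← hs]
    rw [Multiset.filter_map]
    exact congrArg _ (Multiset.filter_congr fun z _ => by simp [hP])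
  rw [hsplit, Multiset.card_add, hconj, Multiset.card_map]
  exact ⟨_, rfl⟩

theorem even_card_lt_neg_one_eigenvalues_pow_general
    {n : ℕ} (A : Matrix (Fin n) (Fin n) ℝ)
    (hA : Even ((A.charpoly.roots.filter (fun x : ℝ => x < -1)).card))
    (m : ℕ) :
    Even ((((A ^ m).charpoly.map (algebraMap ℝ ℂ)).roots.filter
      (fun z : ℂ => z.im = 0 ∧ z.re < -1)).card) := by
  set R := (A.charpoly.map (algebraMap ℝ ℂ)).roots
  have hroots : ((A ^ m).charpoly.map (algebraMap ℝ ℂ)).roots = R.map (· ^ m) := by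
    rw [← charpoly_map, Matrix.map_pow, roots_charpoly_pow_s16, charpoly_map]
  rw [hroots, ← Multiset.filter_add_not (fun z : ℂ => z.im = 0) R, Multiset.map_add,
    Multiset.filter_add, Multiset.card_add, roots_map_ofReal_filter_im_eq_zero]
  refine Even.add ?_ ?_
  · rw [Multiset.map_map, Multiset.filter_map, Multiset.card_map]
    have hreal : ∀ x : ℝ, ((x : ℂ) ^ m).im = 0 ∧ ((x : ℂ) ^ m).re < -1 ↔ Odd m ∧ x < -1 := by
      intro x
      simp [← Complex.ofReal_pow, pow_lt_neg_one_iff]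
    simp only [Function.comp_apply, hreal]
    by_cases hm : Odd m
    · simpa [hm] using hA
    · simp [hm]
  · rw [Multiset.filter_map, Multiset.card_map, Multiset.filter_filter]
    refine Multiset.even_card_filter_im_ne_zero_of_map_conj_eq R
      (roots_map_ofReal_map_conj _) _ fun z => ?_
    simp [← map_pow]

/-- If the number of real eigenvalues of a real matrix `A` in `(-∞, -1)`, counted with
algebraic multiplicity, is even, then for any integer `m ≥ 2` the number of eigenvalues
of `A ^ m` over `ℂ` (counted with algebraic multiplicity) lying in `(-∞, -1)` is even. -/
theorem even_card_lt_neg_one_eigenvalues_pow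
    {n : ℕ} (A : Matrix (Fin n) (Fin n) ℝ)
    (hA : Even ((A.charpoly.roots.filter (fun x : ℝ => x < -1)).card))
    (m : ℕ) (hm : 2 ≤ m) :
    Even ((((A ^ m).charpoly.map (algebraMap ℝ ℂ)).roots.filter
      (fun z : ℂ => z.im = 0 ∧ z.re < -1)).card) :=
  even_card_lt_neg_one_eigenvalues_pow_general A hA m
end
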